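/- Let S be a finite set, p̃ a strictly positive probability mass function on S, and s : S → ℝ not constant. For every c strictly between min_y s_y and max_y s_y, there exists a unique β* ∈ ℝ such that the tilted distribution q_{β*}(y) = p̃(y) e^{β* s_y}/Z(β*) satisfies Σ_y q_{β*}(y) s_y = c. -/

import Mathlib

open Real Finset

/-! The tilted mean equals `c` exactly where `M(β) = ∑ p y · e^{β (s y - c)} · (s y - c)` vanishes.
Each summand `β ↦ e^{β t} t` is monotone, and strictly so when `t ≠ 0`, so `M` is strictly
increasing. As `c` lies strictly between `min s` and `max s`, some summand has `t > 0` and tends to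
`+∞`, while the others are bounded below for `β ≥ 0`; symmetrically `M → -∞` at `-∞`. Hence the
continuous map `M` is a bijection of `ℝ`, and `0` has exactly one preimage. -/

lemma strictMono_exp_mul_mul {t : ℝ} (ht : t ≠ 0) : StrictMono fun β => exp (β * t) * t := by
  intro a b hab
  rcases ht.lt_or_gt with ht | ht
  · have : exp (b * t) < exp (a * t) := exp_lt_exp.2 (by nlinarith)
    dsimp only
    nlinarith
  · have : exp (a * t) < exp (b * t) := exp_lt_exp.2 (by nlinarith)
    dsimp only
    nlinarith

lemma monotone_exp_mul_mul (t : ℝ) : Monotone fun β => exp (β * t) * t := by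
  rcases eq_or_ne t 0 with rfl | ht
  · simp [monotone_const]
  · exact (strictMono_exp_mul_mul ht).monotone

/-- The derivative of the partition function `β ↦ ∑ i, w i * exp (β * t i)`. -/
noncomputable def tiltMoment {ι : Type*} [Fintype ι] (w t : ι → ℝ) (β : ℝ) : ℝ :=
  ∑ i, w i * (exp (β * t i) * t i)

section tiltMoment

variable {ι : Type*} [Fintype ι] {w t : ι → ℝ}

lemma continuous_tiltMoment : Continuous (tiltMoment w t) := by
  unfold tiltMoment
  fun_prop

lemma tiltMoment_neg (β : ℝ) : tiltMoment w (-t) β = -tiltMoment w t (-β) := by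
  simp only [tiltMoment, ← sum_neg_distrib, Pi.neg_apply, mul_neg, neg_mul]

lemma strictMono_tiltMoment (hw : ∀ i, 0 ≤ w i) {i : ι} (hi : 0 < w i) (ht : t i ≠ 0) :
    StrictMono (tiltMoment w t) := fun _ _ hab =>
  sum_lt_sum (fun j _ => mul_le_mul_of_nonneg_left (monotone_exp_mul_mul (t j) hab.le) (hw j))
    ⟨i, mem_univ i, mul_lt_mul_of_pos_left (strictMono_exp_mul_mul ht hab) hi⟩

lemma tendsto_tiltMoment_atTop (hw : ∀ i, 0 ≤ w i) {i : ι} (hi : 0 < w i) (ht : 0 < t i) :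
    Filter.Tendsto (tiltMoment w t) Filter.atTop Filter.atTop := by
  classical
  set term : ι → ℝ → ℝ := fun j β => w j * (exp (β * t j) * t j)
  have hsplit (β : ℝ) : tiltMoment w t β = term i β + ∑ j ∈ univ.erase i, term j β :=
    (add_sum_erase univ (term · β) (mem_univ i)).symm
  -- The summands other than the `i`-th are monotone, hence bounded below by their value at `0`.
  have hbound : ∀ᶠ β in Filter.atTop,
      term i β + (tiltMoment w t 0 - term i 0) ≤ tiltMoment w t β := by
    filter_upwards [Filter.eventually_ge_atTop 0] with β hβ
    rw [hsplit β, hsplit 0, add_sub_cancel_left, add_le_add_iff_left]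
    exact sum_le_sum fun j _ => mul_le_mul_of_nonneg_left (monotone_exp_mul_mul (t j) hβ) (hw j)
  refine Filter.tendsto_atTop_mono' _ hbound (Filter.tendsto_atTop_add_const_right _ _ ?_)
  exact ((tendsto_exp_atTop.comp (Filter.tendsto_id.atTop_mul_const ht)).atTop_mul_const ht)
    |>.const_mul_atTop hi

lemma tendsto_tiltMoment_atBot (hw : ∀ i, 0 ≤ w i) {i : ι} (hi : 0 < w i) (ht : t i < 0) :
    Filter.Tendsto (tiltMoment w t) Filter.atBot Filter.atBot := by
  have hneg : tiltMoment w t = fun β => -tiltMoment w (-t) (-β) := by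
    ext β
    rw [tiltMoment_neg, neg_neg, neg_neg]
  rw [hneg]
  exact Filter.tendsto_neg_atTop_atBot.comp
    ((tendsto_tiltMoment_atTop hw hi (neg_pos.2 ht)).comp Filter.tendsto_neg_atBot_atTop)

lemma bijective_tiltMoment (hw : ∀ i, 0 ≤ w i) {i j : ι} (hi : 0 < w i) (hti : 0 < t i)
    (hj : 0 < w j) (htj : t j < 0) : Function.Bijective (tiltMoment w t) :=
  ⟨(strictMono_tiltMoment hw hi hti.ne').injective,
    continuous_tiltMoment.surjective (tendsto_tiltMoment_atTop hw hi hti)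
      (tendsto_tiltMoment_atBot hw hj htj)⟩

end tiltMoment

noncomputable def tiltedMean {S : Type*} [Fintype S] (p s : S → ℝ) (β : ℝ) : ℝ :=
  ∑ y, (p y * exp (β * s y) / ∑ j, p j * exp (β * s j)) * s y

lemma tiltedMean_eq_iff {S : Type*} [Fintype S] [Nonempty S] {p : S → ℝ} (hp : ∀ y, 0 < p y)
    (s : S → ℝ) (c β : ℝ) : tiltedMean p s β = c ↔ tiltMoment p (fun y => s y - c) β = 0 := by
  set Z := ∑ j, p j * exp (β * s j)
  have hZ : 0 < Z := sum_pos (fun j _ => mul_pos (hp j) (exp_pos _)) univ_nonempty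
  have hmean : tiltedMean p s β = (∑ y, p y * exp (β * s y) * s y) / Z := by
    rw [tiltedMean, sum_div]
    exact sum_congr rfl fun y _ => by ring
  have hmoment : tiltMoment p (fun y => s y - c) β
      = exp (-(β * c)) * ((∑ y, p y * exp (β * s y) * s y) - c * Z) := by
    simp only [tiltMoment, Z, mul_sum, ← sum_sub_distrib]
    refine sum_congr rfl fun y _ => ?_
    rw [mul_sub β, sub_eq_add_neg, exp_add]
    ring
  rw [hmean, hmoment, div_eq_iff hZ.ne', mul_eq_zero, sub_eq_zero]
  simp [(exp_pos _).ne']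

theorem stmt_7_general {S : Type*} [Fintype S] [Nonempty S] (p s : S → ℝ) (c : ℝ)
    (hp : ∀ y, 0 < p y)
    (hc₁ : Finset.univ.inf' Finset.univ_nonempty s < c)
    (hc₂ : c < Finset.univ.sup' Finset.univ_nonempty s) :
    ∃! β : ℝ,
      (∑ y, (p y * Real.exp (β * s y) / (∑ j, p j * Real.exp (β * s j))) * s y) = c := by
  obtain ⟨yhi, -, hyhi⟩ := exists_mem_eq_sup' univ_nonempty s
  obtain ⟨ylo, -, hylo⟩ := exists_mem_eq_inf' univ_nonempty s
  have hbij : Function.Bijective (tiltMoment p fun y => s y - c) :=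
    bijective_tiltMoment (fun y => (hp y).le) (hp yhi) (sub_pos.2 (hyhi ▸ hc₂))
      (hp ylo) (sub_neg.2 (hylo ▸ hc₁))
  exact (existsUnique_congr (tiltedMean_eq_iff hp s c)).2 (hbij.existsUnique 0)

/-- for every c strictly between min s and max s, there is a unique
β* such that the tilted distribution q_{β*} has mean c. -/
theorem stmt_7 {S : Type*} [Fintype S] [Nonempty S] (p s : S → ℝ) (c : ℝ)
    (hp : ∀ y, 0 < p y) (hpsum : ∑ y, p y = 1)
    (hs : ∃ y₁ y₂ : S, s y₁ ≠ s y₂)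
    (hc₁ : Finset.univ.inf' Finset.univ_nonempty s < c)
    (hc₂ : c < Finset.univ.sup' Finset.univ_nonempty s) :
    ∃! β : ℝ,
      (∑ y, (p y * Real.exp (β * s y) / (∑ j, p j * Real.exp (β * s j))) * s y) = c :=
  stmt_7_general p s c hp hc₁ hc₂
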